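/- arXiv:2405.05268 — 2 statements merged into one kernel-verified Lean document; each statement's English description precedes it below -/
import Mathlib

section
/- For every integer k ≥ 1 and every positive integer n, S_{2k}(n) = Σ_{m=1}^{k} R(k,m) · ((2n+1)/(2m+1)) · C(n+m, 2m), as an identity of rational numbers. -/
/-- `S k n = 1^k + 2^k + ⋯ + n^k`, the sum of the `k`-th powers of the first `n`
positive integers. -/
def S (k n : ℕ) : ℕ := ∑ i ∈ Finset.Icc 1 n, i ^ k

/-- `R k m = ∑_{j=0}^m (-1)^j C(2m, j) (m-j)^{2k}`, the sequence A304330. -/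
def R (k m : ℕ) : ℤ :=
  ∑ j ∈ Finset.range (m + 1),
    (-1 : ℤ) ^ j * ((2 * m).choose j : ℤ) * (((m - j) ^ (2 * k) : ℕ) : ℤ)

open scoped fwdDiff

/-- the "combined binomial" basis -/
def cc (n m : ℕ) : ℤ := ((n + m).choose (2 * m) : ℤ) + ((n + m - 1).choose (2 * m) : ℤ)


lemma Rc (k m : ℕ) :
    R k m = ∑ j ∈ Finset.range (m + 1),
      (-1 : ℤ) ^ j * ((2 * m).choose j : ℤ) * ((m : ℤ) - j) ^ (2 * k) := by
  unfold R
  refine Finset.sum_congr rfl fun j hj => ?_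
  have hj' : j ≤ m := by simpa [Nat.lt_succ_iff] using Finset.mem_range.mp hj
  push_cast [Nat.cast_sub hj']
  ring

lemma fd_pow : ∀ (d n : ℕ), d < n → (fwdDiff (1:ℤ))^[n] (fun x : ℤ => x ^ d) = 0 := by
  intro d
  induction d using Nat.strong_induction_on with
  | _ d IH =>
    intro n hn
    obtain ⟨n, rfl⟩ : ∃ n', n = n' + 1 := ⟨n - 1, by omega⟩
    rw [Function.iterate_succ_apply]
    have hexp : fwdDiff (1:ℤ) (fun x : ℤ => x ^ d)
        = ∑ i ∈ Finset.range d, (d.choose i : ℤ) • fun x : ℤ => x ^ i := by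
      funext x
      simp only [fwdDiff, Finset.sum_apply, Pi.smul_apply, smul_eq_mul]
      rw [add_pow, Finset.sum_range_succ]
      simp [mul_comm]
    rw [hexp]
    rw [fwdDiff_iter_finset_sum]
    refine Finset.sum_eq_zero fun i hi => ?_
    have hi' := Finset.mem_range.mp hi
    rw [fwdDiff_iter_const_smul, IH i hi' n (by omega)]
    simp

lemma neg_one_pow_sub {N j : ℕ} (hj : j ≤ N) (hN : Even N) :
    (-1 : ℤ) ^ (N - j) = (-1) ^ j := by
  have h1 : (-1 : ℤ) ^ (N - j) * (-1) ^ j = (-1) ^ N := by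
    rw [← pow_add, Nat.sub_add_cancel hj]
  have h2 : ((-1 : ℤ) ^ j) * ((-1) ^ j) = 1 := by
    rw [← pow_add]; exact Even.neg_one_pow ⟨j, rfl⟩
  calc (-1 : ℤ) ^ (N - j) = (-1) ^ (N - j) * ((-1) ^ j * (-1) ^ j) := by rw [h2, mul_one]
    _ = ((-1) ^ (N - j) * (-1) ^ j) * (-1) ^ j := by ring
    _ = (-1) ^ j := by rw [h1, hN.neg_one_pow, one_mul]

lemma R_eq_zero {k m : ℕ} (hk : 1 ≤ k) (h : k < m) : R k m = 0 := by
  set f : ℕ → ℤ := fun j => (-1 : ℤ) ^ j * ((2 * m).choose j : ℤ) * ((j : ℤ) - m) ^ (2 * k)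
    with hf
  have hRf : R k m = ∑ j ∈ Finset.range (m + 1), f j := by
    rw [Rc]
    refine Finset.sum_congr rfl fun j hj => ?_
    simp only [hf]
    have hep : (-(((j : ℤ) - m))) ^ (2 * k) = ((j : ℤ) - m) ^ (2 * k) :=
      Even.neg_pow (even_two_mul k) _
    rw [show ((m : ℤ) - j) = -((j : ℤ) - m) by ring, hep]
  -- total alternating sum is the 2m-th forward difference of x^(2k) at -m, hence 0
  have htot : ∑ j ∈ Finset.range (2 * m + 1), f j = 0 := by
    have h0 := congrFun (fd_pow (2 * k) (2 * m) (by omega)) (-(m : ℤ))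
    rw [fwdDiff_iter_eq_sum_shift] at h0
    simp only [Pi.zero_apply] at h0
    rw [← h0]
    refine Finset.sum_congr rfl fun j hj => ?_
    have hj' : j ≤ 2 * m := by simpa [Nat.lt_succ_iff] using Finset.mem_range.mp hj
    simp only [hf, smul_eq_mul, nsmul_eq_mul, mul_one, Pi.zero_apply]
    rw [neg_one_pow_sub hj' ⟨m, by ring⟩]
    ring_nf
  -- split the total sum
  have hsplit : ∑ j ∈ Finset.range (2 * m + 1), f j
      = ∑ j ∈ Finset.range (m + 1), f j + ∑ i ∈ Finset.range m, f (m + 1 + i) := by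
    have : 2 * m + 1 = (m + 1) + m := by omega
    rw [this, Finset.sum_range_add]
  -- reflect the upper part
  have hrefl : ∑ i ∈ Finset.range m, f (m + 1 + i) = ∑ i ∈ Finset.range m, f i := by
    rw [← Finset.sum_range_reflect (fun i => f (m + 1 + i)) m]
    refine Finset.sum_congr rfl fun i hi => ?_
    have hi' : i < m := Finset.mem_range.mp hi
    have harg : m + 1 + (m - 1 - i) = 2 * m - i := by omega
    rw [harg]
    simp only [hf]
    have h1 : (-1 : ℤ) ^ (2 * m - i) = (-1) ^ i := neg_one_pow_sub (by omega) ⟨m, by ring⟩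
    have h2 : (2 * m).choose (2 * m - i) = (2 * m).choose i := Nat.choose_symm (by omega)
    have h3 : ((2 * m - i : ℕ) : ℤ) = 2 * m - i := by
      push_cast [Nat.cast_sub (show i ≤ 2 * m by omega)]; ring
    rw [h1, h2, h3]
    congr 1
    have hep : (-(((i : ℤ) - m))) ^ (2 * k) = ((i : ℤ) - m) ^ (2 * k) :=
      Even.neg_pow (even_two_mul k) _
    rw [show ((2 * m : ℤ) - i - m) = -((i : ℤ) - m) by ring, hep]
  have hfm : f m = 0 := by
    simp only [hf, sub_self]
    rw [zero_pow (by omega)]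
    ring
  have hlast : ∑ j ∈ Finset.range (m + 1), f j = ∑ j ∈ Finset.range m, f j + f m :=
    Finset.sum_range_succ f m
  have : 2 * ∑ j ∈ Finset.range (m + 1), f j = 0 := by
    rw [two_mul]
    nth_rewrite 2 [hlast]
    rw [hfm, add_zero, ← hrefl, ← hsplit, htot]
  rw [hRf]
  omega

lemma Rrec (k m : ℕ) :
    R (k + 1) (m + 1) =
      ((m : ℤ) + 1) ^ 2 * R k (m + 1) + (2 * (m : ℤ) + 2) * (2 * m + 1) * R k m := by
  rw [Rc, Rc, Rc]
  -- split each term of LHS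
  have hterm : ∀ j ∈ Finset.range (m + 2),
      (-1 : ℤ) ^ j * ((2 * (m + 1)).choose j : ℤ) * (((m + 1 : ℕ) : ℤ) - j) ^ (2 * (k + 1))
      = ((m : ℤ) + 1) ^ 2 *
          ((-1 : ℤ) ^ j * ((2 * (m + 1)).choose j : ℤ) * (((m + 1 : ℕ) : ℤ) - j) ^ (2 * k))
        - (-1 : ℤ) ^ j * (((2 * (m + 1)).choose j : ℤ) * j * (2 * (m : ℤ) + 2 - j)) *
            (((m + 1 : ℕ) : ℤ) - j) ^ (2 * k) := by
    intro j hj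
    push_cast
    ring
  have hb : ∀ i : ℕ, (2 * (m + 1)).choose (i + 1) * (i + 1) * (2 * m + 1 - i)
      = (2 * m + 2) * (2 * m + 1) * (2 * m).choose i := by
    intro i
    have e1 : (2 * m + 2) * (2 * m + 1).choose i = (2 * (m + 1)).choose (i + 1) * (i + 1) := by
      have := Nat.add_one_mul_choose_eq (2 * m + 1) i
      simpa [Nat.succ_eq_add_one, show 2 * (m + 1) = 2 * m + 1 + 1 by ring] using this
    have e2 : (2 * m + 1) * (2 * m).choose i = (2 * m + 1).choose i * (2 * m + 1 - i) := by
      have h1 := Nat.add_one_mul_choose_eq (2 * m) i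
      have h2 := Nat.choose_succ_right_eq (2 * m + 1) i
      omega
    calc (2 * (m + 1)).choose (i + 1) * (i + 1) * (2 * m + 1 - i)
        = (2 * m + 2) * ((2 * m + 1).choose i * (2 * m + 1 - i)) := by rw [← e1]; ring
      _ = (2 * m + 2) * ((2 * m + 1) * (2 * m).choose i) := by rw [← e2]
      _ = (2 * m + 2) * (2 * m + 1) * (2 * m).choose i := by ring
  have hbz : ∀ i : ℕ, ((2 * (m + 1)).choose (i + 1) : ℤ) * ((i : ℤ) + 1) * (2 * m + 1 - i)
      = (2 * m + 2) * (2 * m + 1) * ((2 * m).choose i : ℤ) := by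
    intro i
    have h2mi : ((2 * m + 1 - i : ℕ) : ℤ) * ((2 * (m+1)).choose (i+1) * (i+1) : ℤ)
        = (2 * (m+1)).choose (i+1) * ((i:ℤ)+1) * ((2 * m + 1 - i : ℕ) : ℤ) := by ring
    rcases le_or_gt i (2 * m + 1) with hle | hlt
    · have := congrArg (Nat.cast : ℕ → ℤ) (hb i)
      push_cast [Nat.cast_sub hle] at this
      linarith [this]
    · -- i > 2m+1 : choose terms vanish
      have c1 : (2 * (m + 1)).choose (i + 1) = 0 := Nat.choose_eq_zero_of_lt (by omega)
      have c2 : (2 * m).choose i = 0 := Nat.choose_eq_zero_of_lt (by omega)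
      rw [c1, c2]
      push_cast
      ring
  have key : ∑ j ∈ Finset.range (m + 2),
      (-1 : ℤ) ^ j * (((2 * (m + 1)).choose j : ℤ) * j * (2 * (m : ℤ) + 2 - j)) *
        (((m + 1 : ℕ) : ℤ) - j) ^ (2 * k)
      = -((2 * (m : ℤ) + 2) * (2 * m + 1)) *
          ∑ j ∈ Finset.range (m + 1),
            (-1 : ℤ) ^ j * ((2 * m).choose j : ℤ) * ((m : ℤ) - j) ^ (2 * k) := by
    rw [Finset.sum_range_succ']
    have hz : (-1 : ℤ) ^ 0 * (((2 * (m + 1)).choose 0 : ℤ) * (0:ℕ) * (2 * (m : ℤ) + 2 - (0:ℕ))) *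
        (((m + 1 : ℕ) : ℤ) - ((0:ℕ) : ℤ)) ^ (2 * k) = 0 := by push_cast; ring
    rw [hz, add_zero, Finset.mul_sum]
    refine Finset.sum_congr rfl fun i hi => ?_
    have h := hbz i
    push_cast
    linear_combination (-(-1:ℤ)^i * ((m : ℤ) - i) ^ (2*k)) * h
  rw [Finset.sum_congr rfl hterm, Finset.sum_sub_distrib, ← Finset.mul_sum, key]
  ring

lemma csr (n k : ℕ) (h : k ≤ n) :
    (n.choose (k + 1) : ℤ) * (k + 1) = (n.choose k : ℤ) * ((n : ℤ) - k) := by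
  have := congrArg (Nat.cast : ℕ → ℤ) (Nat.choose_succ_right_eq n k)
  push_cast [Nat.cast_sub h] at this
  linarith

lemma cms (n k : ℕ) (h : k ≤ n + 1) :
    (n.choose k : ℤ) * ((n : ℤ) + 1) = ((n + 1).choose k : ℤ) * ((n : ℤ) + 1 - k) := by
  have := congrArg (Nat.cast : ℕ → ℤ) (Nat.choose_mul_succ_eq n k)
  push_cast [Nat.cast_sub h] at this
  linarith

lemma cc_step (n m : ℕ) (hm : 1 ≤ m) :
    (n : ℤ) ^ 2 * cc n m = (m : ℤ) ^ 2 * cc n m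
      + (2 * (m : ℤ) + 1) * (2 * m + 2) * cc n (m + 1) := by
  rcases lt_or_ge n m with hlt | hle
  · have z1 : (n + m).choose (2 * m) = 0 := Nat.choose_eq_zero_of_lt (by omega)
    have z2 : (n + m - 1).choose (2 * m) = 0 := Nat.choose_eq_zero_of_lt (by omega)
    have z3 : (n + (m + 1)).choose (2 * (m + 1)) = 0 := Nat.choose_eq_zero_of_lt (by omega)
    have z4 : (n + (m + 1) - 1).choose (2 * (m + 1)) = 0 := Nat.choose_eq_zero_of_lt (by omega)
    have z5 : (n + m).choose (2 * (m + 1)) = 0 := Nat.choose_eq_zero_of_lt (by omega)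
    simp [cc, z1, z2, z3, z4, z5]
  · obtain ⟨x, rfl⟩ : ∃ x, n = m + x := ⟨n - m, by omega⟩
    rcases Nat.eq_zero_or_pos x with rfl | hx
    · have e1 : m + 0 + m = 2 * m := by ring
      have z2 : (m + 0 + m - 1).choose (2 * m) = 0 := Nat.choose_eq_zero_of_lt (by omega)
      have z3 : (m + 0 + (m + 1)).choose (2 * (m + 1)) = 0 := Nat.choose_eq_zero_of_lt (by omega)
      have z4 : (m + 0 + (m + 1) - 1).choose (2 * (m + 1)) = 0 :=
        Nat.choose_eq_zero_of_lt (by omega)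
      have z5 : (m + m).choose (2 * (m + 1)) = 0 := Nat.choose_eq_zero_of_lt (by omega)
      have z6 : (m + (m + 1)).choose (2 * (m + 1)) = 0 := Nat.choose_eq_zero_of_lt (by omega)
      have e2 : m + m = 2 * m := by omega
      have z7 : (2 * m).choose (2 * (m + 1)) = 0 := Nat.choose_eq_zero_of_lt (by omega)
      simp [cc, e1, e2, z2, z3, z4, z5, z6, z7]
    · obtain ⟨y, rfl⟩ : ∃ y, x = y + 1 := ⟨x - 1, by omega⟩
      have a1 : m + (y + 1) + m = 2 * m + y + 1 := by ring
      have a2 : m + (y + 1) + m - 1 = 2 * m + y := by omega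
      have a3 : m + (y + 1) + (m + 1) = 2 * m + y + 2 := by ring
      have a4 : m + (y + 1) + (m + 1) - 1 = 2 * m + y + 1 := by omega
      have a5 : 2 * (m + 1) = 2 * m + 1 + 1 := by ring
      rw [cc, cc, a2, a1, a4, a3, a5]
      -- helper identities
      have h1 : ((2 * m + y + 2).choose (2 * m) : ℤ) * ((y : ℤ) + 2)
          = ((2 * m + y + 1).choose (2 * m) : ℤ) * (2 * (m : ℤ) + y + 2) := by
        have := cms (2 * m + y + 1) (2 * m) (by omega)
        rw [show (2 * m + y + 1 + 1) = 2 * m + y + 2 by omega] at this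
        push_cast at this ⊢
        linear_combination -this
      have h2 : ((2 * m + y).choose (2 * m) : ℤ) * (2 * (m : ℤ) + y + 1)
          = ((2 * m + y + 1).choose (2 * m) : ℤ) * ((y : ℤ) + 1) := by
        have := cms (2 * m + y) (2 * m) (by omega)
        rw [show (2 * m + y + 1) = 2 * m + y + 1 by omega] at this
        push_cast at this ⊢
        linear_combination this
      have h3 : ((2 * m + y + 2).choose (2 * m + 1 + 1) : ℤ) * (2 * (m:ℤ) + 1 + 1)
          = ((2 * m + y + 2).choose (2 * m + 1) : ℤ) * ((y:ℤ) + 1) := by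
        have := csr (2 * m + y + 2) (2 * m + 1) (by omega)
        push_cast at this ⊢
        linear_combination this
      have h4 : ((2 * m + y + 2).choose (2 * m + 1) : ℤ) * (2 * (m:ℤ) + 1)
          = ((2 * m + y + 2).choose (2 * m) : ℤ) * ((y:ℤ) + 2) := by
        have := csr (2 * m + y + 2) (2 * m) (by omega)
        push_cast at this ⊢
        linear_combination this
      have h5 : ((2 * m + y + 1).choose (2 * m + 1 + 1) : ℤ) * (2 * (m:ℤ) + 1 + 1)
          = ((2 * m + y + 1).choose (2 * m + 1) : ℤ) * (y:ℤ) := by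
        have := csr (2 * m + y + 1) (2 * m + 1) (by omega)
        push_cast at this ⊢
        linear_combination this
      have h6 : ((2 * m + y + 1).choose (2 * m + 1) : ℤ) * (2 * (m:ℤ) + 1)
          = ((2 * m + y + 1).choose (2 * m) : ℤ) * ((y:ℤ) + 1) := by
        have := csr (2 * m + y + 1) (2 * m) (by omega)
        push_cast at this ⊢
        linear_combination this
      push_cast
      linear_combination (-(2*(m:ℤ)+1)) * h3 - ((y:ℤ)+1) * h4 - ((y:ℤ)+1) * h1
        - (2*(m:ℤ)+1) * h5 - (y:ℤ) * h6 + ((y:ℤ)+1) * h2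

lemma ratioNat (n m : ℕ) :
    (2 * n + 1) * (n + m).choose (2 * m)
      = (2 * m + 1) * ((n + m + 1).choose (2 * m + 1) + (n + m).choose (2 * m + 1)) := by
  have key : ((2 * n + 1 : ℕ) : ℤ) * ((n + m).choose (2 * m) : ℤ)
      = ((2 * m + 1 : ℕ) : ℤ) *
        (((n + m + 1).choose (2 * m + 1) : ℤ) + ((n + m).choose (2 * m + 1) : ℤ)) := by
    rcases lt_or_ge n m with hlt | hle
    · have z1 : (n + m).choose (2 * m) = 0 := Nat.choose_eq_zero_of_lt (by omega)
      have z2 : (n + m + 1).choose (2 * m + 1) = 0 := Nat.choose_eq_zero_of_lt (by omega)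
      have z3 : (n + m).choose (2 * m + 1) = 0 := Nat.choose_eq_zero_of_lt (by omega)
      simp [z1, z2, z3]
    · obtain ⟨x, rfl⟩ : ∃ x, n = m + x := ⟨n - m, by omega⟩
      have a1 : m + x + m = 2 * m + x := by ring
      have a2 : m + x + m + 1 = 2 * m + x + 1 := by ring
      rw [a2, a1]
      have hA : ((2 * m + x + 1).choose (2 * m + 1) : ℤ) * (2 * (m:ℤ) + 1)
          = ((2 * m + x + 1).choose (2 * m) : ℤ) * ((x:ℤ) + 1) := by
        have := csr (2 * m + x + 1) (2 * m) (by omega)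
        push_cast at this ⊢
        linear_combination this
      have hB : ((2 * m + x).choose (2 * m + 1) : ℤ) * (2 * (m:ℤ) + 1)
          = ((2 * m + x).choose (2 * m) : ℤ) * (x:ℤ) := by
        have := csr (2 * m + x) (2 * m) (by omega)
        push_cast at this ⊢
        linear_combination this
      have h1 : ((2 * m + x).choose (2 * m) : ℤ) * (2 * (m:ℤ) + x + 1)
          = ((2 * m + x + 1).choose (2 * m) : ℤ) * ((x:ℤ) + 1) := by
        have := cms (2 * m + x) (2 * m) (by omega)
        push_cast at this ⊢
        rw [show ((2:ℤ) * m + x + 1 - 2 * m) = (x:ℤ) + 1 by ring] at this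
        linarith
      push_cast
      linear_combination -hA - hB + h1
  exact_mod_cast key

lemma telescope (m n : ℕ) (hm : 1 ≤ m) :
    ∑ i ∈ Finset.Icc 1 n, cc i m
      = ((n + m + 1).choose (2 * m + 1) : ℤ) + ((n + m).choose (2 * m + 1) : ℤ) := by
  induction n with
  | zero =>
    have z1 : (m + 1).choose (2 * m + 1) = 0 := Nat.choose_eq_zero_of_lt (by omega)
    have z2 : m.choose (2 * m + 1) = 0 := Nat.choose_eq_zero_of_lt (by omega)
    simp [z1, z2]
  | succ n ih =>
    rw [Finset.sum_Icc_succ_top (by omega : 1 ≤ n + 1), ih]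
    have hcc : cc (n + 1) m = ((n + m + 1).choose (2 * m) : ℤ) + ((n + m).choose (2 * m) : ℤ) := by
      rw [cc, show n + 1 + m - 1 = n + m by omega, show n + 1 + m = n + m + 1 by omega]
    rw [hcc]
    have p1 : (n + 1 + m + 1).choose (2 * m + 1)
        = (n + m + 1).choose (2 * m) + (n + m + 1).choose (2 * m + 1) := by
      rw [show n + 1 + m + 1 = (n + m + 1) + 1 by omega]
      exact Nat.choose_succ_succ' (n + m + 1) (2 * m)
    have p2 : (n + 1 + m).choose (2 * m + 1)
        = (n + m).choose (2 * m) + (n + m).choose (2 * m + 1) := by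
      rw [show n + 1 + m = (n + m) + 1 by omega]
      exact Nat.choose_succ_succ' (n + m) (2 * m)
    rw [p1, p2]
    push_cast
    ring

lemma R_zero_right (k : ℕ) (hk : 1 ≤ k) : R k 0 = 0 := by
  unfold R
  rw [Finset.sum_range_one]
  have : (0 : ℕ) ^ (2 * k) = 0 := by
    apply Nat.zero_pow; omega
  simp [this]

lemma R_one_one : R 1 1 = 1 := by
  unfold R
  rw [Finset.sum_range_succ, Finset.sum_range_one]
  norm_num

lemma cc_base (n : ℕ) : cc n 1 = (n : ℤ) ^ 2 := by
  induction n with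
  | zero => simp [cc]
  | succ n ih =>
    have h1 : cc (n + 1) 1 - cc n 1 = 2 * (n : ℤ) + 1 := by
      rw [cc, cc, show n + 1 + 1 - 1 = n + 1 by omega, show n + 1 - 1 = n by omega]
      have p1 : (n + 1 + 1).choose 2 = (n + 1).choose 1 + (n + 1).choose 2 :=
        Nat.choose_succ_succ' (n + 1) 1
      have p2 : (n + 1).choose 2 = n.choose 1 + n.choose 2 := Nat.choose_succ_succ' n 1
      rw [p1, p2]
      push_cast [Nat.choose_one_right]
      ring
    have := h1
    rw [ih] at this
    push_cast
    linear_combination this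

lemma L4 (k : ℕ) (hk : 1 ≤ k) (n : ℕ) :
    (n : ℤ) ^ (2 * k) = ∑ i ∈ Finset.range k, R k (i + 1) * cc n (i + 1) := by
  induction k with
  | zero => omega
  | succ k ih =>
    rcases Nat.eq_zero_or_pos k with rfl | hk'
    · rw [Finset.sum_range_one, R_one_one, cc_base]
      ring
    · have IH := ih hk'
      calc (n : ℤ) ^ (2 * (k + 1))
          = (n : ℤ) ^ 2 * (n : ℤ) ^ (2 * k) := by rw [← pow_add]; ring_nf
        _ = ∑ i ∈ Finset.range k, R k (i + 1) * ((n : ℤ) ^ 2 * cc n (i + 1)) := by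
            rw [IH, Finset.mul_sum]; exact Finset.sum_congr rfl fun i _ => by ring
        _ = ∑ i ∈ Finset.range k, R k (i + 1) *
              (((i : ℤ) + 1) ^ 2 * cc n (i + 1)
                + (2 * (i : ℤ) + 3) * (2 * i + 4) * cc n (i + 2)) := by
            refine Finset.sum_congr rfl fun i _ => ?_
            have := cc_step n (i + 1) (by omega)
            push_cast at this ⊢
            rw [this]
            ring_nf
        _ = ∑ i ∈ Finset.range k, R k (i + 1) * (((i : ℤ) + 1) ^ 2 * cc n (i + 1))
            + ∑ i ∈ Finset.range k, R k (i + 1) * ((2 * (i : ℤ) + 3) * (2 * i + 4) * cc n (i + 2))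
              := by rw [← Finset.sum_add_distrib]; exact Finset.sum_congr rfl fun i _ => by ring
        _ = ∑ i ∈ Finset.range (k + 1), R (k + 1) (i + 1) * cc n (i + 1) := by
            -- RHS: expand with Rrec and split
            have hR : ∀ i : ℕ, R (k + 1) (i + 1) * cc n (i + 1)
                = ((i : ℤ) + 1) ^ 2 * R k (i + 1) * cc n (i + 1)
                  + (2 * (i : ℤ) + 2) * (2 * i + 1) * R k i * cc n (i + 1) := by
              intro i
              rw [Rrec]
              ring
            rw [Finset.sum_congr rfl fun i _ => hR i, Finset.sum_add_distrib]
            congr 1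
            · -- drop last term using R_eq_zero
              rw [Finset.sum_range_succ, R_eq_zero hk' (by omega), mul_zero, zero_mul, add_zero]
              exact Finset.sum_congr rfl fun i _ => by ring
            · -- drop first term using R k 0 = 0, shift index
              rw [Finset.sum_range_succ']
              rw [R_zero_right k hk']
              simp only [Nat.cast_zero, mul_zero, zero_mul, add_zero]
              refine (Finset.sum_congr rfl fun i _ => ?_).symm
              push_cast
              ring

theorem stmt_2 (k n : ℕ) (hk : 1 ≤ k) (hn : 1 ≤ n) :
    (S (2 * k) n : ℚ) =
      ∑ m ∈ Finset.Icc 1 k,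
        (R k m : ℚ) * ((2 * n + 1 : ℚ) / (2 * m + 1 : ℚ)) * ((n + m).choose (2 * m) : ℚ) := by
  have hQ : ∀ i : ℕ, ((i : ℚ)) ^ (2 * k)
      = ∑ m ∈ Finset.Icc 1 k, (R k m : ℚ) * ((cc i m : ℤ) : ℚ) := by
    intro i
    have h := L4 k hk i
    have hcast := congrArg (fun z : ℤ => (z : ℚ)) h
    push_cast at hcast
    rw [hcast]
    rw [show Finset.Icc 1 k = Finset.Ico 1 (k + 1) by rw [Finset.Ico_add_one_right_eq_Icc],
      Finset.sum_Ico_eq_sum_range]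
    simp only [Nat.add_sub_cancel]
    exact Finset.sum_congr rfl fun i _ => by rw [Nat.add_comm 1 i]
  calc (S (2 * k) n : ℚ)
      = ∑ i ∈ Finset.Icc 1 n, ((i : ℚ)) ^ (2 * k) := by rw [S]; push_cast; rfl
    _ = ∑ i ∈ Finset.Icc 1 n, ∑ m ∈ Finset.Icc 1 k, (R k m : ℚ) * ((cc i m : ℤ) : ℚ) :=
        Finset.sum_congr rfl fun i _ => hQ i
    _ = ∑ m ∈ Finset.Icc 1 k, ∑ i ∈ Finset.Icc 1 n, (R k m : ℚ) * ((cc i m : ℤ) : ℚ) :=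
        Finset.sum_comm
    _ = ∑ m ∈ Finset.Icc 1 k,
          (R k m : ℚ) * (((n + m + 1).choose (2 * m + 1) : ℚ) + ((n + m).choose (2 * m + 1) : ℚ))
        := by
        refine Finset.sum_congr rfl fun m hm => ?_
        have hm1 : 1 ≤ m := (Finset.mem_Icc.mp hm).1
        rw [← Finset.mul_sum]
        congr 1
        have := congrArg (fun z : ℤ => (z : ℚ)) (telescope m n hm1)
        push_cast at this
        rw [← this]
    _ = ∑ m ∈ Finset.Icc 1 k,
          (R k m : ℚ) * ((2 * n + 1 : ℚ) / (2 * m + 1 : ℚ)) * ((n + m).choose (2 * m) : ℚ) := by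
        refine Finset.sum_congr rfl fun m hm => ?_
        have hden : (2 * (m : ℚ) + 1) ≠ 0 := by positivity
        have hr := congrArg (fun z : ℕ => (z : ℚ)) (ratioNat n m)
        push_cast at hr
        rw [mul_assoc]
        congr 1
        rw [div_mul_eq_mul_div, eq_comm, div_eq_iff hden]
        linear_combination hr
end

section
/- For all positive integers k and m with 1 ≤ m ≤ k, R(k,m) = 2^(2k+m-1) · m! · Σ (2k)! / (b_1! · b_2! ⋯ b_k!) · Π_{r=1}^{k} (1 / (4^r · (2r)!))^{b_r}, where the summation extends over all k-tuples of nonnegative integers (b_1, b_2, …, b_k) satisfying b_1 + 2·b_2 + ⋯ + k·b_k = k and b_1 + b_2 + ⋯ + b_k = m, and the identity is between rational numbers. -/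
/-- The finset of `k`-tuples `(b_1, …, b_k)` of nonnegative integers (indexed by
`Fin k`, with `b r` standing for `b_{r+1}`) satisfying `b_1 + 2 b_2 + ⋯ + k b_k = k`
and `b_1 + b_2 + ⋯ + b_k = m`.  Note every such tuple has all entries `≤ k`, so
restricting to entries in `range (k+1)` loses nothing. -/
def tuples (k m : ℕ) : Finset (Fin k → ℕ) :=
  (Fintype.piFinset fun _ : Fin k => Finset.range (k + 1)).filter
    fun b => (∑ r : Fin k, (r.1 + 1) * b r) = k ∧ (∑ r : Fin k, b r) = m

/-!
The series `S = cosh (X / 2) - 1 = ∑_{r ≥ 1} X^{2r} / (4^r (2r)!)` factors as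
`S = ½ e^{-X/2} (1 - e^{X/2})²`, so `S^m = 2^{-m} ∑_j (-1)^j C(2m, j) e^{(j - m) X / 2}` and
`(2k)! 2^m 4^k [X^{2k}] S^m = ∑_{j ≤ 2m} (-1)^j C(2m, j) (m - j)^{2k} = 2 R(k, m)`, the sum
being symmetric under `j ↦ 2m - j` with vanishing middle term. On the other hand `[X^{2k}] S^m`
only sees the terms `r ≤ k` of `S`, and the multinomial theorem expands it as the sum over the
tuples `b`.
-/

open Finset PowerSeries

theorem coeff_pow_eq_of_coeff_eq {R : Type*} [CommSemiring R] {φ ψ : R⟦X⟧} {N : ℕ}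
    (h : ∀ i ≤ N, coeff i φ = coeff i ψ) (m : ℕ) : coeff N (φ ^ m) = coeff N (ψ ^ m) := by
  have htrunc : trunc (N + 1) φ = trunc (N + 1) ψ := by
    ext i
    simp only [coeff_trunc]
    split_ifs with hi
    · exact h i (Nat.le_of_lt_succ hi)
    · rfl
  have key := congrArg (fun p => p.coeff N) (trunc_trunc_pow φ (N + 1) m)
  rw [htrunc, trunc_trunc_pow] at key
  simpa [coeff_trunc] using key.symm

theorem Nat.cast_multinomial {K α : Type*} [Field K] [CharZero K] (s : Finset α) (f : α → ℕ) :
    (Nat.multinomial s f : K) = (∑ i ∈ s, f i).factorial / ∏ i ∈ s, ((f i).factorial : K) := by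
  rw [eq_div_iff (prod_ne_zero_iff.mpr fun i _ => Nat.cast_ne_zero.mpr (Nat.factorial_ne_zero _)),
    mul_comm]
  exact_mod_cast Nat.multinomial_spec s f

theorem tuples_eq_filter_piAntidiag (k m : ℕ) :
    tuples k m = (piAntidiag univ m).filter fun b : Fin k → ℕ => ∑ r, (r.1 + 1) * b r = k := by
  ext b
  simp only [tuples, mem_filter, mem_piAntidiag, Fintype.mem_piFinset, mem_range, mem_univ,
    ne_eq, implies_true, and_true]
  constructor
  · rintro ⟨-, hw, hs⟩
    exact ⟨hs, hw⟩
  · rintro ⟨hs, hw⟩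
    refine ⟨fun r => Nat.lt_succ_of_le ?_, hw, hs⟩
    calc b r ≤ (r.1 + 1) * b r := Nat.le_mul_of_pos_left _ r.1.succ_pos
      _ ≤ ∑ r, (r.1 + 1) * b r := single_le_sum (f := fun r : Fin k => (r.1 + 1) * b r)
          (fun i _ => Nat.zero_le _) (mem_univ r)
      _ = k := hw

theorem coeff_sum_pow_eq_sum_tuples {R : Type*} [CommSemiring R] (k m : ℕ) (a : Fin k → R) :
    coeff (2 * k) ((∑ r : Fin k, C (a r) * X ^ (2 * (r.1 + 1))) ^ m) =
      ∑ b ∈ tuples k m, Nat.multinomial univ b * ∏ r, a r ^ b r := by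
  rw [sum_pow_eq_sum_piAntidiag, map_sum, tuples_eq_filter_piAntidiag, sum_filter]
  refine sum_congr rfl fun b _ => ?_
  have hprod : ∏ r : Fin k, (C (a r) * X ^ (2 * (r.1 + 1))) ^ b r
      = C (∏ r, a r ^ b r) * X ^ (2 * ∑ r : Fin k, (r.1 + 1) * b r) := by
    simp only [mul_pow, prod_mul_distrib, map_prod, map_pow, ← pow_mul, prod_pow_eq_pow_sum,
      mul_sum, mul_assoc]
  rw [hprod, ← map_natCast C, ← mul_assoc, ← map_mul, coeff_C_mul_X_pow]
  simp only [Nat.mul_left_cancel_iff two_pos, eq_comm]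

theorem factorial_mul_sum_tuples (k m N : ℕ) (w : (Fin k → ℕ) → ℚ) :
    (m.factorial : ℚ) * ∑ b ∈ tuples k m, (N.factorial / ∏ r, ((b r).factorial : ℚ)) * w b =
      N.factorial * ∑ b ∈ tuples k m, Nat.multinomial univ b * w b := by
  simp only [mul_sum]
  refine sum_congr rfl fun b hb => ?_
  rw [Nat.cast_multinomial, (mem_filter.mp hb).2.2]
  ring

theorem two_mul_R_eq_sum {k : ℕ} (hk : k ≠ 0) (m : ℕ) :
    2 * R k m =
      ∑ j ∈ range (2 * m + 1), (-1 : ℤ) ^ j * (2 * m).choose j * ((m : ℤ) - j) ^ (2 * k) := by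
  set t : ℕ → ℤ := fun j => (-1 : ℤ) ^ j * (2 * m).choose j * ((m : ℤ) - j) ^ (2 * k)
  have reflect (i : ℕ) (hi : i ≤ m) : t (m + i) = t (m - i) := by
    have sign : (-1 : ℤ) ^ (m + i) = (-1) ^ (m - i) := by
      rw [show m + i = m - i + 2 * i by omega, pow_add, pow_mul, neg_one_sq, one_pow, mul_one]
    have binom : (2 * m).choose (m + i) = (2 * m).choose (m - i) :=
      Nat.choose_symm_of_eq_add (by omega)
    simp only [t, sign, binom, Nat.cast_add, Nat.cast_sub hi, sub_add_eq_sub_sub, sub_self,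
      zero_sub, sub_sub_cancel, Even.neg_pow (even_two_mul k)]
  have center : t m = 0 := by simp [t, hk]
  have hR : R k m = ∑ j ∈ range (m + 1), t j :=
    sum_congr rfl fun j hj => by
      rw [mem_range] at hj
      simp [t, Nat.cast_sub (Nat.le_of_lt_succ hj)]
  calc 2 * R k m = ∑ j ∈ range (m + 1), t j + ∑ i ∈ range m, t (m - 1 - i) := by
        rw [hR, sum_range_reflect t m, sum_range_succ t m, center]; ring
    _ = ∑ j ∈ range (m + 1), t j + ∑ i ∈ range m, t (m + 1 + i) := by
        congr 1
        refine sum_congr rfl fun i hi => ?_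
        rw [mem_range] at hi
        rw [show m + 1 + i = m + (i + 1) by omega, reflect (i + 1) hi]
        congr 1; omega
    _ = ∑ j ∈ range (2 * m + 1), t j := by
        rw [show 2 * m + 1 = m + 1 + m by omega, sum_range_add t (m + 1) m]

noncomputable section

def expMul (a : ℚ) : ℚ⟦X⟧ := rescale a (exp ℚ)

theorem expMul_add (a b : ℚ) : expMul (a + b) = expMul a * expMul b :=
  (exp_mul_exp_eq_exp_add a b).symm

theorem expMul_pow (a : ℚ) (n : ℕ) : expMul a ^ n = expMul (n * a) := by
  rw [expMul, ← map_pow, exp_pow_eq_rescale_exp, rescale_rescale, expMul]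

theorem coeff_expMul (a : ℚ) (n : ℕ) : coeff n (expMul a) = a ^ n / n.factorial := by
  simp [expMul, coeff_rescale, coeff_exp, div_eq_mul_inv]

def coshHalfSubOne : ℚ⟦X⟧ := C (1 / 2) * (expMul (1 / 2) + expMul (-1 / 2)) - 1

def coshHalfCoeff (r : ℕ) : ℚ := 1 / (4 ^ r * (2 * r).factorial)

theorem coshHalfSubOne_eq :
    coshHalfSubOne = C (1 / 2) * expMul (-1 / 2) * (1 - expMul (1 / 2)) ^ 2 := by
  have h₁ : expMul (-1 / 2) * expMul (1 / 2) = 1 := by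
    rw [← expMul_add]; norm_num [expMul]
  have h₂ : expMul (-1 / 2) * expMul (1 / 2) ^ 2 = expMul (1 / 2) := by
    rw [sq, ← mul_assoc, h₁, one_mul]
  have h₃ : C (1 / 2 : ℚ) * 2 = 1 := by
    rw [← map_ofNat C 2, ← map_mul]; norm_num
  rw [coshHalfSubOne]
  linear_combination C (1 / 2 : ℚ) * (2 * h₁ - h₂) + h₃

theorem coshHalfSubOne_pow (m : ℕ) :
    coshHalfSubOne ^ m = ∑ j ∈ range (2 * m + 1),
      C ((1 / 2 : ℚ) ^ m * (-1) ^ j * (2 * m).choose j) * expMul (((j : ℚ) - m) / 2) := by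
  rw [coshHalfSubOne_eq, mul_pow, mul_pow, ← pow_mul, sub_eq_neg_add, add_pow, mul_sum]
  refine sum_congr rfl fun j _ => ?_
  have hexp : expMul (-1 / 2) ^ m * expMul (1 / 2) ^ j = expMul (((j : ℚ) - m) / 2) := by
    rw [expMul_pow, expMul_pow, ← expMul_add]
    ring_nf
  simp only [map_mul, map_pow, map_neg, map_one, map_natCast, neg_pow (expMul _), one_pow, ← hexp]
  ring

theorem coeff_two_mul_coshHalfSubOne_pow (m k : ℕ) :
    coeff (2 * k) (coshHalfSubOne ^ m) =
      (∑ j ∈ range (2 * m + 1), (-1 : ℚ) ^ j * (2 * m).choose j * ((m : ℚ) - j) ^ (2 * k)) /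
        (2 ^ m * 4 ^ k * (2 * k).factorial) := by
  rw [coshHalfSubOne_pow, map_sum, sum_div]
  refine sum_congr rfl fun j _ => ?_
  rw [coeff_C_mul, coeff_expMul, ← neg_sub, neg_div, Even.neg_pow (even_two_mul k),
    div_pow ((m : ℚ) - j) 2, pow_mul (2 : ℚ), one_div, inv_pow]
  field_simp
  norm_num

theorem coeff_coshHalfSubOne (n : ℕ) :
    coeff n coshHalfSubOne =
      (1 / 2) ^ n / n.factorial * ((1 + (-1) ^ n) / 2) - if n = 0 then 1 else 0 := by
  simp only [coshHalfSubOne, map_sub, coeff_C_mul, map_add, coeff_expMul, coeff_one]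
  rw [show (-1 / 2 : ℚ) = -1 * (1 / 2) by norm_num, mul_pow]
  ring

theorem coeff_coshHalfSubOne_eq_coeff_sum (k : ℕ) : ∀ n ≤ 2 * k,
    coeff n coshHalfSubOne =
      coeff n (∑ r : Fin k, C (coshHalfCoeff (r.1 + 1)) * X ^ (2 * (r.1 + 1))) := by
  intro n hn
  simp only [map_sum, coeff_C_mul_X_pow, coeff_coshHalfSubOne]
  obtain ⟨t, rfl | rfl⟩ := Nat.even_or_odd' n
  · rcases t with _ | t
    · simp
    · have ht : t < k := by omega
      rw [Fintype.sum_eq_single ⟨t, ht⟩ fun r hr => if_neg fun h => hr (Fin.ext (by simp; omega)),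
        if_pos rfl, if_neg (by omega), (even_two_mul _).neg_one_pow, pow_mul]
      norm_num [coshHalfCoeff, div_pow, div_eq_mul_inv, mul_comm]
  · rw [Fintype.sum_eq_zero _ fun r => if_neg (by omega), if_neg (by omega),
      Odd.neg_one_pow ⟨t, rfl⟩]
    ring

end

theorem stmt_6 (k m : ℕ) (hm : 1 ≤ m) (hk : m ≤ k) :
    (R k m : ℚ) =
      2 ^ (2 * k + m - 1) * (Nat.factorial m : ℚ) *
        ∑ b ∈ tuples k m,
          ((Nat.factorial (2 * k) : ℚ) / ∏ r : Fin k, (Nat.factorial (b r) : ℚ)) *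
            ∏ r : Fin k,
              ((1 : ℚ) / (4 ^ (r.1 + 1) * (Nat.factorial (2 * (r.1 + 1)) : ℚ))) ^ (b r) := by
  have hR : (2 * R k m : ℚ) = ∑ j ∈ range (2 * m + 1),
      (-1 : ℚ) ^ j * (2 * m).choose j * ((m : ℚ) - j) ^ (2 * k) := by
    exact_mod_cast two_mul_R_eq_sum (by omega : k ≠ 0) m
  have hcoeff := coeff_pow_eq_of_coeff_eq (coeff_coshHalfSubOne_eq_coeff_sum k) m
  rw [coeff_two_mul_coshHalfSubOne_pow, coeff_sum_pow_eq_sum_tuples, ← hR] at hcoeff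
  have hpow : (2 : ℚ) ^ m * 4 ^ k = 2 ^ (2 * k + m - 1) * 2 := by
    rw [← pow_succ, show 2 * k + m - 1 + 1 = m + 2 * k by omega, pow_add, pow_mul]
    norm_num
  rw [mul_assoc, factorial_mul_sum_tuples]
  simp only [coshHalfCoeff] at hcoeff
  rw [← hcoeff, hpow]
  field_simp
end
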